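/- arXiv:2602.22939 — 5 statements merged into one kernel-verified Lean document; each statement's English description precedes it below -/
import Mathlib

section
/- Let A, U† be n×n real matrices, B an n×m real matrix, and Σ_ref a symmetric positive definite n×n real matrix. Suppose Σ : ℝ^{n×n} → ℝ^{n×n} is Fréchet differentiable at U† and satisfies (A+U) Σ(U) (A+U)ᵀ − Σ(U) + BBᵀ = 0 for all U in a neighborhood of U†, that Σ† := Σ(U†) is symmetric positive definite, and that Λ† is a symmetric n×n matrix satisfying the adjoint Lyapunov equation (A+U†)ᵀ Λ† (A+U†) − Λ† + (1/2)(Σ_ref⁻¹ − (Σ†)⁻¹) = 0. Define J(U) = (1/2)( tr(Σ_ref⁻¹ Σ(U)) − n + log det Σ_ref − log det Σ(U) ). Then J is differentiable at U† and its Fréchet derivative at U† applied to a direction H ∈ ℝ^{n×n} equals tr( (2 Λ† (A+U†) Σ†)ᵀ H ); i.e., the gradient of J with respect to U at U† is 2 Λ† (A+U†) Σ†. -/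
/-!
Jacobi's formula `d(log det Σ) = tr(Σ⁻¹ dΣ)` shows that `J` has derivative `tr(P dΣ)` with
`P = ½(Σref⁻¹ − Σ⁻¹)`. Differentiating the Lyapunov constraint at `U†` in direction `H` gives
`dΣ − M dΣ Mᵀ = M Σ Hᵀ + H Σ Mᵀ`, `M = A + U†`, while the adjoint equation says
`P = Λ − Mᵀ Λ M`. Hence, by cyclicity of the trace, `tr(P dΣ) = tr(Λ (dΣ − M dΣ Mᵀ))
= tr(Λ M Σ Hᵀ) + tr(Λ H Σ Mᵀ)`, and the symmetry of `Λ` and `Σ` turns both terms into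
`tr((Λ M Σ)ᵀ H)`.
-/

open Matrix Filter

attribute [local instance] Matrix.normedAddCommGroup Matrix.normedSpace

namespace Matrix

variable {ι κ ν : Type*} [Fintype ι] [Fintype κ] [Fintype ν]

theorem sum_det_updateRow {R : Type*} [CommRing R] [DecidableEq ι] (X H : Matrix ι ι R) :
    ∑ i, (X.updateRow i (H i)).det = (X.adjugate * H).trace := by
  simp only [← cramer_transpose_apply, cramer_eq_adjugate_mulVec, ← adjugate_transpose,
    trace, diag, mulVec, dotProduct, mul_apply, transpose_apply]
  rw [Finset.sum_comm]

theorem trace_mul_eq_of_lyapunov_adjoint {R : Type*} [CommRing R] {M S L P K H : Matrix ι ι R}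
    (hS : S.IsSymm) (hL : L.IsSymm) (hP : Mᵀ * L * M - L + P = 0)
    (hK : M * S * Hᵀ + (M * K + H * S) * Mᵀ - K = 0) :
    (P * K).trace = (((2 : R) • (L * M * S))ᵀ * H).trace := by
  have hP' : P = L - Mᵀ * L * M := by rw [← sub_eq_zero, ← hP]; abel
  have hK' : K - M * K * Mᵀ = M * S * Hᵀ + H * S * Mᵀ := by
    rw [← sub_eq_zero, ← neg_eq_zero, ← hK]; noncomm_ring
  have hMKM : (Mᵀ * L * M * K).trace = (L * (M * K * Mᵀ)).trace := by
    rw [show Mᵀ * L * M * K = Mᵀ * (L * M * K) by noncomm_ring, trace_mul_comm]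
    congr 1; noncomm_ring
  have hN : (L * M * S)ᵀ = S * Mᵀ * L := by
    rw [transpose_mul, transpose_mul, hS.eq, hL.eq, Matrix.mul_assoc]
  calc (P * K).trace = (L * (K - M * K * Mᵀ)).trace := by
        rw [hP', sub_mul, trace_sub, hMKM, mul_sub, trace_sub]
    _ = (L * M * S * Hᵀ).trace + (S * Mᵀ * (L * H)).trace := by
        rw [hK', mul_add, trace_add, trace_mul_comm (S * Mᵀ)]
        simp only [Matrix.mul_assoc]
    _ = (((2 : R) • (L * M * S))ᵀ * H).trace := by
        rw [← trace_transpose (L * M * S * Hᵀ), transpose_mul, transpose_transpose,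
          trace_mul_comm, hN, ← Matrix.mul_assoc (S * Mᵀ) L H, transpose_smul, hN, smul_mul,
          trace_smul, smul_eq_mul, two_mul]

variable {𝕜 : Type*} [NontriviallyNormedField 𝕜] [CompleteSpace 𝕜]

-- The types of these maps carry the product topology of `Matrix`, not its norm topology; the two
-- agree only up to unfolding, so their values are computed by `show` rather than by rewriting.
noncomputable def traceMulCLM (A : Matrix ι ι 𝕜) : Matrix ι ι 𝕜 →L[𝕜] 𝕜 :=
  LinearMap.toContinuousLinearMap (traceLinearMap ι 𝕜 𝕜 ∘ₗ mulLeftLinearMap ι 𝕜 A)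

variable (𝕜) in
noncomputable def mulCLM : Matrix ι κ 𝕜 →L[𝕜] Matrix κ ν 𝕜 →L[𝕜] Matrix ι ν 𝕜 :=
  (mulLinearMap 𝕜).toContinuousBilinearMap

variable (𝕜) in
noncomputable def transposeCLM : Matrix ι κ 𝕜 →L[𝕜] Matrix κ ι 𝕜 :=
  LinearMap.toContinuousLinearMap (transposeLinearEquiv ι κ 𝕜 𝕜).toLinearMap

section Derivatives

variable {E : Type*} [NormedAddCommGroup E] [NormedSpace 𝕜 E] {x : E}

theorem _root_.HasFDerivAt.matrix_mul {f : E → Matrix ι κ 𝕜} {g : E → Matrix κ ν 𝕜}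
    {f' : E →L[𝕜] Matrix ι κ 𝕜} {g' : E →L[𝕜] Matrix κ ν 𝕜}
    (hf : HasFDerivAt f f' x) (hg : HasFDerivAt g g' x) :
    HasFDerivAt (fun y => f y * g y)
      ((mulCLM 𝕜).precompR E (f x) g' + (mulCLM 𝕜).precompL E f' (g x)) x :=
  (mulCLM 𝕜).hasFDerivAt_of_bilinear hf hg

theorem _root_.HasFDerivAt.matrix_transpose {f : E → Matrix ι κ 𝕜} {f' : E →L[𝕜] Matrix ι κ 𝕜}
    (hf : HasFDerivAt f f' x) :
    HasFDerivAt (fun y => (f y)ᵀ) ((transposeCLM 𝕜).comp f') x := by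
  exact (transposeCLM 𝕜).hasFDerivAt.comp x hf

end Derivatives

theorem _root_.HasFDerivAt.lyapunov_linearization {A U₀ : Matrix ι ι 𝕜} {B : Matrix ι κ 𝕜}
    {Sig : Matrix ι ι 𝕜 → Matrix ι ι 𝕜} {S' : Matrix ι ι 𝕜 →L[𝕜] Matrix ι ι 𝕜}
    (hS : HasFDerivAt Sig S' U₀)
    (hLyap : ∀ᶠ U in nhds U₀, (A + U) * Sig U * (A + U)ᵀ - Sig U + B * Bᵀ = 0)
    (H : Matrix ι ι 𝕜) :
    (A + U₀) * Sig U₀ * Hᵀ + ((A + U₀) * S' H + H * Sig U₀) * (A + U₀)ᵀ - S' H = 0 := by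
  have hM : HasFDerivAt (fun U => A + U) (ContinuousLinearMap.id 𝕜 _) U₀ :=
    (hasFDerivAt_id U₀).const_add A
  have hF := (((hM.matrix_mul hS).matrix_mul hM.matrix_transpose).sub hS).add_const (B * Bᵀ)
  have hF0 := hF.unique ((hasFDerivAt_const 0 U₀).congr_of_eventuallyEq hLyap)
  exact congr($hF0 H)

variable [DecidableEq ι]

noncomputable def detContinuousMultilinearMap :
    ContinuousMultilinearMap 𝕜 (fun _ : ι => ι → 𝕜) 𝕜 :=
  ⟨detRowAlternating.toMultilinearMap, continuous_id.matrix_det⟩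

theorem hasFDerivAt_det (X : Matrix ι ι 𝕜) :
    HasFDerivAt det (traceMulCLM X.adjugate) X := by
  refine (detContinuousMultilinearMap.hasFDerivAt X).congr_fderiv ?_
  ext H
  exact (ContinuousMultilinearMap.linearDeriv_apply _ _ _).trans (sum_det_updateRow X H)

theorem hasFDerivAt_log_det {X : Matrix ι ι ℝ} (hX : X.det ≠ 0) :
    HasFDerivAt (fun M : Matrix ι ι ℝ => Real.log M.det) (traceMulCLM X⁻¹) X := by
  refine ((Real.hasDerivAt_log hX).comp_hasFDerivAt X (hasFDerivAt_det X)).congr_fderiv ?_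
  refine ContinuousLinearMap.ext fun H => ?_
  show X.det⁻¹ * (X.adjugate * H).trace = (X⁻¹ * H).trace
  rw [inv_def, Ring.inverse_eq_inv', smul_mul, trace_smul, smul_eq_mul]

end Matrix

noncomputable def gaussianKL {ι : Type*} [Fintype ι] [DecidableEq ι] (S Sref : Matrix ι ι ℝ) : ℝ :=
  (1 / 2) * ((Sref⁻¹ * S).trace - Fintype.card ι + Real.log Sref.det - Real.log S.det)

theorem hasFDerivAt_gaussianKL {ι : Type*} [Fintype ι] [DecidableEq ι] {S : Matrix ι ι ℝ}
    (Sref : Matrix ι ι ℝ) (hS : S.det ≠ 0) :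
    HasFDerivAt (gaussianKL · Sref) (traceMulCLM ((1 / 2 : ℝ) • (Sref⁻¹ - S⁻¹))) S := by
  refine ((((traceMulCLM Sref⁻¹).hasFDerivAt.sub_const _).add_const _).sub
    (hasFDerivAt_log_det hS)).const_mul (1 / 2 : ℝ) |>.congr_fderiv ?_
  refine ContinuousLinearMap.ext fun H => ?_
  show (1 / 2 : ℝ) * ((Sref⁻¹ * H).trace - (S⁻¹ * H).trace)
    = ((1 / 2 : ℝ) • (Sref⁻¹ - S⁻¹) * H).trace
  rw [smul_mul, sub_mul, trace_smul, trace_sub, smul_eq_mul]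

theorem gradient_of_KL_objective_general {n m : ℕ}
    (A Udag : Matrix (Fin n) (Fin n) ℝ) (B : Matrix (Fin n) (Fin m) ℝ)
    (Sref : Matrix (Fin n) (Fin n) ℝ)
    (Sig : Matrix (Fin n) (Fin n) ℝ → Matrix (Fin n) (Fin n) ℝ)
    (hdiff : DifferentiableAt ℝ Sig Udag)
    (hLyap : ∀ᶠ U in nhds Udag, (A + U) * Sig U * (A + U)ᵀ - Sig U + B * Bᵀ = 0)
    (hpd : (Sig Udag).PosDef)
    (Ldag : Matrix (Fin n) (Fin n) ℝ) (hLsymm : Ldag.IsSymm)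
    (hadj : (A + Udag)ᵀ * Ldag * (A + Udag) - Ldag
        + (1 / 2 : ℝ) • (Sref⁻¹ - (Sig Udag)⁻¹) = 0) :
    ∃ f' : Matrix (Fin n) (Fin n) ℝ →L[ℝ] ℝ,
      HasFDerivAt (fun U : Matrix (Fin n) (Fin n) ℝ =>
          (1 / 2) * ((Sref⁻¹ * Sig U).trace - (n : ℝ)
            + Real.log Sref.det - Real.log (Sig U).det))
        f' Udag ∧
      ∀ H : Matrix (Fin n) (Fin n) ℝ,
        f' H = (((2 : ℝ) • (Ldag * (A + Udag) * Sig Udag))ᵀ * H).trace := by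
  have hSig := hdiff.hasFDerivAt
  have hJ := (hasFDerivAt_gaussianKL Sref hpd.det_pos.ne').comp Udag hSig
  simp only [Function.comp_def, gaussianKL, Fintype.card_fin] at hJ
  refine ⟨_, hJ, fun H => ?_⟩
  show ((1 / 2 : ℝ) • (Sref⁻¹ - (Sig Udag)⁻¹) * fderiv ℝ Sig Udag H).trace = _
  exact trace_mul_eq_of_lyapunov_adjoint (isHermitian_iff_isSymm.mp hpd.isHermitian) hLsymm hadj
    (hSig.lyapunov_linearization hLyap H)

/-- Gradient of the KL objective `J(U) = KL(Σ(U) ‖ Σref)` subject to the Lyapunov constraint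
`(A+U) Σ(U) (A+U)ᵀ − Σ(U) + BBᵀ = 0`: if `Σ` is Fréchet differentiable at `U†`, satisfies the
constraint near `U†`, `Σ† = Σ(U†)` is symmetric positive definite, and the symmetric matrix `Λ†`
solves the adjoint Lyapunov equation `(A+U†)ᵀ Λ† (A+U†) − Λ† + (1/2)(Σref⁻¹ − (Σ†)⁻¹) = 0`,
then `J` is differentiable at `U†` with derivative `H ↦ tr((2 Λ† (A+U†) Σ†)ᵀ H)`,
i.e. the gradient of `J` at `U†` is `2 Λ† (A+U†) Σ†`. -/
theorem gradient_of_KL_objective {n m : ℕ}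
    (A Udag : Matrix (Fin n) (Fin n) ℝ) (B : Matrix (Fin n) (Fin m) ℝ)
    (Sref : Matrix (Fin n) (Fin n) ℝ) (href : Sref.PosDef)
    (Sig : Matrix (Fin n) (Fin n) ℝ → Matrix (Fin n) (Fin n) ℝ)
    (hdiff : DifferentiableAt ℝ Sig Udag)
    (hLyap : ∀ᶠ U in nhds Udag, (A + U) * Sig U * (A + U)ᵀ - Sig U + B * Bᵀ = 0)
    (hpd : (Sig Udag).PosDef)
    (Ldag : Matrix (Fin n) (Fin n) ℝ) (hLsymm : Ldag.IsSymm)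
    (hadj : (A + Udag)ᵀ * Ldag * (A + Udag) - Ldag
        + (1 / 2 : ℝ) • (Sref⁻¹ - (Sig Udag)⁻¹) = 0) :
    ∃ f' : Matrix (Fin n) (Fin n) ℝ →L[ℝ] ℝ,
      HasFDerivAt (fun U : Matrix (Fin n) (Fin n) ℝ =>
          (1 / 2) * ((Sref⁻¹ * Sig U).trace - (n : ℝ)
            + Real.log Sref.det - Real.log (Sig U).det))
        f' Udag ∧
      ∀ H : Matrix (Fin n) (Fin n) ℝ,
        f' H = (((2 : ℝ) • (Ldag * (A + Udag) * Sig Udag))ᵀ * H).trace :=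
  gradient_of_KL_objective_general A Udag B Sref Sig hdiff hLyap hpd Ldag hLsymm hadj
end

section
/- Let Σ₁, Σ₂ be symmetric positive definite n×n real matrices. Then tr(Σ₂⁻¹ Σ₁) − n + log(det Σ₂ / det Σ₁) ≥ 0, with equality if and only if Σ₁ = Σ₂. -/
/-!
Whiten by `Σ₂`: writing `Σ₂⁻¹ = yᴴ y` with `y` invertible, the matrix `B = y Σ₁ yᴴ` is positive
definite with `tr B = tr(Σ₂⁻¹ Σ₁)` and `det B = det Σ₁ / det Σ₂`, so the divergence equals
`tr B − n − log det B = ∑ᵢ (μᵢ − 1 − log μᵢ)` over the eigenvalues `μᵢ > 0` of `B`. Each term is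
nonnegative by `log x ≤ x − 1`, with equality only at `μᵢ = 1`, i.e. only for `B = 1`, which
means `Σ₁ = Σ₂`.
-/

open Matrix Real
open scoped ComplexOrder

lemma Real.sub_one_sub_log_nonneg {x : ℝ} (hx : 0 < x) : 0 ≤ x - 1 - log x := by
  linarith [log_le_sub_one_of_pos hx]

lemma Real.sub_one_sub_log_eq_zero_iff {x : ℝ} (hx : 0 < x) : x - 1 - log x = 0 ↔ x = 1 := by
  refine ⟨fun h => ?_, fun h => by simp [h]⟩
  by_contra hne
  linarith [log_lt_sub_one_of_pos hx hne]

namespace Matrix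

variable {ι : Type*} [Fintype ι] [DecidableEq ι]

lemma IsHermitian.eq_one_of_eigenvalues_eq_one {𝕜 : Type*} [RCLike 𝕜] {A : Matrix ι ι 𝕜}
    (hA : A.IsHermitian) (h : ∀ i, hA.eigenvalues i = 1) : A = 1 := by
  rw [hA.spectral_theorem, funext h]
  simp [Function.comp_def]

lemma PosDef.exists_isUnit_inv_eq_conjTranspose_mul_self {𝕜 : Type*} [RCLike 𝕜]
    {A : Matrix ι ι 𝕜} (hA : A.PosDef) : ∃ y : Matrix ι ι 𝕜, IsUnit y ∧ A⁻¹ = yᴴ * y := by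
  open scoped MatrixOrder in
  exact CStarAlgebra.isStrictlyPositive_iff_eq_star_mul_self.mp hA.inv.isStrictlyPositive

lemma nonsing_inv_mul_eq_one_iff {R : Type*} [CommRing R] {A B : Matrix ι ι R}
    (hdet : IsUnit B.det) : B⁻¹ * A = 1 ↔ A = B := by
  refine ⟨fun h => ?_, fun h => h ▸ B.nonsing_inv_mul hdet⟩
  simpa [h] using (B.mul_nonsing_inv_cancel_left A hdet).symm

variable {A : Matrix ι ι ℝ}

lemma PosDef.trace_sub_card_sub_log_det (hA : A.PosDef) :
    A.trace - Fintype.card ι - log A.det =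
      ∑ i, (hA.1.eigenvalues i - 1 - log (hA.1.eigenvalues i)) := by
  simp only [hA.1.trace_eq_sum_eigenvalues, hA.1.det_eq_prod_eigenvalues, RCLike.ofReal_real_eq_id,
    id, log_prod fun i _ => (hA.eigenvalues_pos i).ne', Finset.sum_sub_distrib, Finset.sum_const,
    Finset.card_univ, nsmul_eq_mul, mul_one]

lemma PosDef.trace_sub_card_sub_log_det_nonneg (hA : A.PosDef) :
    0 ≤ A.trace - Fintype.card ι - log A.det := by
  rw [hA.trace_sub_card_sub_log_det]
  exact Finset.sum_nonneg fun i _ => sub_one_sub_log_nonneg (hA.eigenvalues_pos i)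

lemma PosDef.trace_sub_card_sub_log_det_eq_zero_iff (hA : A.PosDef) :
    A.trace - Fintype.card ι - log A.det = 0 ↔ A = 1 := by
  refine ⟨fun h => hA.1.eq_one_of_eigenvalues_eq_one fun i => ?_, fun h => by simp [h]⟩
  rw [hA.trace_sub_card_sub_log_det, Finset.sum_eq_zero_iff_of_nonneg
    fun i _ => sub_one_sub_log_nonneg (hA.eigenvalues_pos i)] at h
  exact (sub_one_sub_log_eq_zero_iff (hA.eigenvalues_pos i)).1 (h i (Finset.mem_univ i))

end Matrix

/-- Nonnegativity of the Gaussian KL divergence in closed form: for symmetric positive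
definite `Σ₁, Σ₂`, one has `tr(Σ₂⁻¹ Σ₁) − n + log(det Σ₂ / det Σ₁) ≥ 0`, with equality
iff `Σ₁ = Σ₂`. -/
theorem gaussian_kl_nonneg {n : ℕ}
    (S1 S2 : Matrix (Fin n) (Fin n) ℝ) (h1 : S1.PosDef) (h2 : S2.PosDef) :
    0 ≤ (S2⁻¹ * S1).trace - (n : ℝ) + Real.log (S2.det / S1.det) ∧
    ((S2⁻¹ * S1).trace - (n : ℝ) + Real.log (S2.det / S1.det) = 0 ↔ S1 = S2) := by
  obtain ⟨y, hy, hS2⟩ := h2.exists_isUnit_inv_eq_conjTranspose_mul_self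
  set B := y * S1 * yᴴ
  have hB : B.PosDef := h1.mul_mul_conjTranspose_same (vecMul_injective_iff_isUnit.2 hy)
  have htrace : (S2⁻¹ * S1).trace = B.trace := by
    rw [hS2, Matrix.mul_assoc, trace_mul_comm]
  have hdet : S2.det / S1.det = B.det⁻¹ := by
    have hdetS2 : S2.det⁻¹ = y.det * yᴴ.det := by
      rw [← Ring.inverse_eq_inv', ← det_nonsing_inv, hS2, det_mul, mul_comm]
    rw [det_mul, det_mul, mul_right_comm, ← hdetS2, mul_inv, inv_inv, div_eq_mul_inv]
  have hkl : (S2⁻¹ * S1).trace - (n : ℝ) + Real.log (S2.det / S1.det) =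
      B.trace - Fintype.card (Fin n) - Real.log B.det := by
    rw [htrace, hdet, Real.log_inv, Fintype.card_fin, ← sub_eq_add_neg]
  have hB_eq_one : B = 1 ↔ S1 = S2 := by
    rw [mul_eq_one_comm, ← Matrix.mul_assoc, ← hS2, nonsing_inv_mul_eq_one_iff h2.det_pos.ne'.isUnit]
  rw [hkl, ← hB_eq_one]
  exact ⟨hB.trace_sub_card_sub_log_det_nonneg, hB.trace_sub_card_sub_log_det_eq_zero_iff⟩
end

section
/- Let A be an n×n real matrix all of whose complex eigenvalues have modulus strictly less than 1 (A is Schur stable), and let Q be an n×n real matrix. Then the series Σ_{k=0}^{∞} Aᵏ Q (Aᵀ)ᵏ converges, and its sum Σ satisfies the discrete Lyapunov equation A Σ Aᵀ − Σ + Q = 0. -/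
open Matrix

/-- `A` is Schur stable: every complex eigenvalue of `A` has modulus strictly less than 1. -/
def IsSchurStable {n : ℕ} (A : Matrix (Fin n) (Fin n) ℝ) : Prop :=
  ∀ μ ∈ spectrum ℂ (A.map (Complex.ofReal ·)), ‖μ‖ < 1

/-!
Viewed as a complex matrix, `A` has spectral radius `< 1`, and so has `Aᵀ`, which has the same
characteristic polynomial. By Gelfand's formula both `‖Aᵏ‖` and `‖(Aᵀ)ᵏ‖` are eventually
bounded by geometric sequences with ratio `< 1`, so the series is dominated by a convergent
geometric series. Multiplying the series by `A` on the left and `Aᵀ` on the right shifts it by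
one index, which is exactly the Lyapunov equation.
-/

open Filter
open scoped NNReal

section BanachAlgebra

variable {A : Type*} [NormedRing A] [NormedAlgebra ℂ A] [CompleteSpace A]

theorem eventually_norm_pow_le_of_spectralRadius_lt {a : A} {r : ℝ≥0}
    (h : spectralRadius ℂ a < r) : ∀ᶠ k in atTop, ‖a ^ k‖ ≤ (r : ℝ) ^ k := by
  filter_upwards [(spectrum.pow_nnnorm_pow_one_div_tendsto_nhds_spectralRadius a).eventually_lt_const
      h |>.mono fun _ => le_of_lt, eventually_gt_atTop 0] with k hk hk0
  rw [one_div, ENNReal.rpow_inv_le_iff (Nat.cast_pos.mpr hk0), ENNReal.rpow_natCast,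
    ← ENNReal.coe_pow, ENNReal.coe_le_coe] at hk
  exact_mod_cast hk

theorem summable_pow_mul_mul_pow_of_spectralRadius_lt_one {a b : A}
    (ha : spectralRadius ℂ a < 1) (hb : spectralRadius ℂ b < 1) (q : A) :
    Summable fun k => a ^ k * q * b ^ k := by
  obtain ⟨r, har, hr1⟩ := ENNReal.lt_iff_exists_nnreal_btwn.mp ha
  obtain ⟨s, hbs, hs1⟩ := ENNReal.lt_iff_exists_nnreal_btwn.mp hb
  have hrs : (r : ℝ) * s < 1 :=
    mul_lt_one_of_nonneg_of_lt_one_left r.2 (mod_cast hr1) (mod_cast hs1.le)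
  refine .of_norm_bounded_eventually_nat
    ((summable_geometric_of_lt_one (by positivity) hrs).mul_left ‖q‖) ?_
  filter_upwards [eventually_norm_pow_le_of_spectralRadius_lt har,
    eventually_norm_pow_le_of_spectralRadius_lt hbs] with k hak hbk
  calc ‖a ^ k * q * b ^ k‖ ≤ ‖a ^ k‖ * ‖q‖ * ‖b ^ k‖ := norm_mul₃_le
    _ ≤ r ^ k * ‖q‖ * s ^ k := by gcongr
    _ = ‖q‖ * (r * s) ^ k := by ring

end BanachAlgebra

theorem HasSum.lyapunov_eq {R : Type*} [Ring R] [TopologicalSpace R] [IsTopologicalRing R]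
    [T2Space R] {a b q s : R} (h : HasSum (fun k => a ^ k * q * b ^ k) s) :
    a * s * b - s + q = 0 := by
  have hshift : HasSum (fun k => a ^ (k + 1) * q * b ^ (k + 1)) (a * s * b) := by
    have hterm (k : ℕ) : a * (a ^ k * q * b ^ k) * b = a ^ (k + 1) * q * b ^ (k + 1) := by
      rw [pow_succ', pow_succ]
      simp only [mul_assoc]
    simpa only [hterm] using (h.mul_left a).mul_right b
  have hs : HasSum (fun k => a ^ k * q * b ^ k) (a * s * b + q) :=
    (hasSum_nat_add_iff' 1).mp (by simpa using hshift)
  rw [sub_add_eq_add_sub, sub_eq_zero]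
  exact (h.unique hs).symm

theorem Matrix.spectrum_transpose {n R : Type*} [Fintype n] [DecidableEq n] [CommRing R]
    (B : Matrix n n R) : spectrum R Bᵀ = spectrum R B := by
  ext r
  simp only [mem_spectrum_iff_not_isUnit_eval_charpoly, charpoly_transpose]

theorem Matrix.summable_map_ofReal_iff {ι m n : Type*} {f : ι → Matrix m n ℝ} :
    Summable (fun k => (f k).map ((↑) : ℝ → ℂ)) ↔ Summable f :=
  Pi.summable.trans <| (forall_congr' fun _ => Pi.summable.trans <|
    forall_congr' fun _ => Complex.summable_ofReal).trans <|
    (forall_congr' fun _ => Pi.summable.symm).trans Pi.summable.symm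

namespace IsSchurStable

variable {n : ℕ} {A : Matrix (Fin n) (Fin n) ℝ}

theorem transpose (hA : IsSchurStable A) : IsSchurStable Aᵀ := by
  intro μ hμ
  rw [transpose_map, spectrum_transpose] at hμ
  exact hA μ hμ

section

attribute [local instance] Matrix.linftyOpNormedRing Matrix.linftyOpNormedAlgebra

theorem spectralRadius_map_lt_one [Nonempty (Fin n)] (hA : IsSchurStable A) :
    spectralRadius ℂ (A.map (Complex.ofReal ·)) < 1 := by
  simpa using spectrum.spectralRadius_lt_of_forall_lt _ (r := 1) fun μ hμ =>
    mod_cast hA μ hμ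

theorem summable_pow_mul_mul_transpose_pow (hA : IsSchurStable A)
    (Q : Matrix (Fin n) (Fin n) ℝ) : Summable fun k => A ^ k * Q * Aᵀ ^ k := by
  cases isEmpty_or_nonempty (Fin n)
  · exact .of_subsingleton_cod
  have hterm (k : ℕ) : (A ^ k * Q * Aᵀ ^ k).map (Complex.ofReal ·) =
      A.map (Complex.ofReal ·) ^ k * Q.map (Complex.ofReal ·) * Aᵀ.map (Complex.ofReal ·) ^ k := by
    change Complex.ofRealHom.mapMatrix (A ^ k * Q * Aᵀ ^ k) = _
    rw [map_mul, map_mul, map_pow, map_pow]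
    rfl
  rw [← summable_map_ofReal_iff]
  simp only [hterm]
  exact summable_pow_mul_mul_pow_of_spectralRadius_lt_one hA.spectralRadius_map_lt_one
    hA.transpose.spectralRadius_map_lt_one _

end

end IsSchurStable

/-- If `A` is Schur stable then the series `Σₖ Aᵏ Q (Aᵀ)ᵏ` converges, and its sum `S`
solves the discrete Lyapunov equation `A S Aᵀ − S + Q = 0`. -/
theorem lyapunov_series_solution {n : ℕ}
    (A Q : Matrix (Fin n) (Fin n) ℝ) (hA : IsSchurStable A) :
    ∃ S : Matrix (Fin n) (Fin n) ℝ,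
      HasSum (fun k : ℕ => A ^ k * Q * (Aᵀ) ^ k) S ∧
      A * S * Aᵀ - S + Q = 0 := by
  obtain ⟨S, hS⟩ := hA.summable_pow_mul_mul_transpose_pow Q
  exact ⟨S, hS, hS.lyapunov_eq⟩
end

section
/- Let A be an n×n real matrix all of whose complex eigenvalues have modulus strictly less than 1 (A is Schur stable), and let Q be an n×n real matrix. Then the discrete Lyapunov equation A Σ Aᵀ − Σ + Q = 0 has at most one solution Σ among n×n real matrices: if Σ₁ and Σ₂ both satisfy the equation, then Σ₁ = Σ₂. -/
/-!
Subtracting the two equations, `D = Σ₁ - Σ₂` is a fixed point of `X ↦ A X Aᵀ`, hence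
`D = Aᵏ D (Aᵀ)ᵏ` for every `k`. Schur stability says that the spectral radius of `A` (over `ℂ`) is
below `1`, so by Gelfand's formula `Aᵏ → 0`, and then also `(Aᵀ)ᵏ = (Aᵏ)ᵀ → 0`; hence `D = 0`.
-/

open Matrix

open Filter Topology
open scoped ENNReal

theorem spectralRadius_lt_one_of_forall_norm_lt_one {A : Type*} [NormedRing A]
    [NormedAlgebra ℂ A] [CompleteSpace A] {a : A} (h : ∀ z ∈ spectrum ℂ a, ‖z‖ < 1) :
    spectralRadius ℂ a < 1 := by
  rcases subsingleton_or_nontrivial A with _ | _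
  · simp [spectralRadius, spectrum.of_subsingleton]
  · exact_mod_cast spectrum.spectralRadius_lt_of_forall_lt a (r := 1) fun z hz =>
      mod_cast h z hz

/-- Gelfand's formula gives `‖a ^ k‖ ≤ c ^ k` eventually, for any `c` strictly between the
spectral radius and `1`. -/
theorem tendsto_pow_atTop_nhds_zero_of_spectralRadius_lt_one {A : Type*} [NormedRing A]
    [NormedAlgebra ℂ A] [CompleteSpace A] {a : A} (ha : spectralRadius ℂ a < 1) :
    Tendsto (fun k : ℕ => a ^ k) atTop (𝓝 0) := by
  obtain ⟨c, hac, hc1⟩ := ENNReal.lt_iff_exists_nnreal_btwn.mp ha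
  have hroot : ∀ᶠ k : ℕ in atTop, (‖a ^ k‖₊ : ℝ≥0∞) ^ (1 / (k : ℝ)) < c :=
    (spectrum.pow_nnnorm_pow_one_div_tendsto_nhds_spectralRadius a).eventually_lt_const hac
  have hbound : ∀ᶠ k : ℕ in atTop, ‖a ^ k‖ ≤ (c : ℝ) ^ k := by
    filter_upwards [hroot, eventually_ge_atTop 1] with k hk hk1
    have hkpos : (0 : ℝ) < k := by exact_mod_cast hk1
    have hpow := ENNReal.rpow_lt_rpow hk hkpos
    rw [← ENNReal.rpow_mul, one_div, inv_mul_cancel₀ hkpos.ne', ENNReal.rpow_one,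
      ENNReal.rpow_natCast, ← ENNReal.coe_pow, ENNReal.coe_lt_coe] at hpow
    exact_mod_cast hpow.le
  rw [tendsto_zero_iff_norm_tendsto_zero]
  exact squeeze_zero' (.of_forall fun k => norm_nonneg _) hbound
    (tendsto_pow_atTop_nhds_zero_of_lt_one c.2 (mod_cast hc1))

theorem pow_mul_mul_pow_eq_self {M : Type*} [Monoid M] {a b x : M} (h : a * x * b = x) (k : ℕ) :
    a ^ k * x * b ^ k = x := by
  induction k with
  | zero => simp
  | succ k ih =>
    calc a ^ (k + 1) * x * b ^ (k + 1) = a ^ k * (a * x * b) * b ^ k := by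
          rw [pow_succ a, pow_succ' b]; simp only [mul_assoc]
      _ = x := by rw [h, ih]

theorem eq_zero_of_mul_mul_eq_self {M : Type*} [MonoidWithZero M] [TopologicalSpace M]
    [ContinuousMul M] [T2Space M] {a b x : M} (ha : Tendsto (fun k : ℕ => a ^ k) atTop (𝓝 0))
    (hb : Tendsto (fun k : ℕ => b ^ k) atTop (𝓝 0)) (h : a * x * b = x) : x = 0 := by
  have hlim : Tendsto (fun k : ℕ => a ^ k * x * b ^ k) atTop (𝓝 0) := by
    simpa using (ha.mul_const x).mul hb
  simp only [pow_mul_mul_pow_eq_self h] at hlim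
  exact tendsto_nhds_unique tendsto_const_nhds hlim

section

attribute [local instance] Matrix.linftyOpNormedRing Matrix.linftyOpNormedAlgebra

theorem IsSchurStable.tendsto_pow_map_ofReal {n : ℕ} {A : Matrix (Fin n) (Fin n) ℝ}
    (hA : IsSchurStable A) :
    Tendsto (fun k : ℕ => A.map (Complex.ofReal ·) ^ k) atTop (𝓝 0) :=
  tendsto_pow_atTop_nhds_zero_of_spectralRadius_lt_one
    (spectralRadius_lt_one_of_forall_norm_lt_one hA)

end

/-- If `A` is Schur stable then the discrete Lyapunov equation `A Σ Aᵀ − Σ + Q = 0` has at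
most one solution. -/
theorem lyapunov_solution_unique {n : ℕ}
    (A Q : Matrix (Fin n) (Fin n) ℝ) (hA : IsSchurStable A)
    (S1 S2 : Matrix (Fin n) (Fin n) ℝ)
    (h1 : A * S1 * Aᵀ - S1 + Q = 0) (h2 : A * S2 * Aᵀ - S2 + Q = 0) :
    S1 = S2 := by
  have hfix : A * (S1 - S2) * Aᵀ = S1 - S2 := by
    rw [Matrix.mul_sub, Matrix.sub_mul]
    calc A * S1 * Aᵀ - A * S2 * Aᵀ
        = (A * S1 * Aᵀ - S1 + Q) - (A * S2 * Aᵀ - S2 + Q) + (S1 - S2) := by abel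
      _ = S1 - S2 := by rw [h1, h2]; abel
  have hfixℂ := congrArg (Matrix.map · Complex.ofRealHom) hfix
  simp only [Matrix.map_mul, Matrix.transpose_map] at hfixℂ
  have hpowT : Tendsto (fun k : ℕ => (A.map (Complex.ofReal ·))ᵀ ^ k) atTop (𝓝 0) := by
    simpa only [Function.comp_def, id_eq, Matrix.transpose_pow, Matrix.transpose_zero] using
      (continuous_id.matrix_transpose.tendsto 0).comp hA.tendsto_pow_map_ofReal
  have hzero := eq_zero_of_mul_mul_eq_self hA.tendsto_pow_map_ofReal hpowT hfixℂ
  rw [← Matrix.map_zero Complex.ofRealHom (map_zero _)] at hzero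
  exact sub_eq_zero.mp (Matrix.map_injective Complex.ofReal_injective hzero)
end

section
/- Let A be an n×n real matrix all of whose complex eigenvalues have modulus strictly less than 1 (A is Schur stable), let Q be an n×n real matrix, and let Σ⋆ be the unique solution of A Σ Aᵀ − Σ + Q = 0. Then for every initial n×n real matrix Σ₀, the iteration Σ_{k+1} = A Σ_k Aᵀ + Q converges to Σ⋆ as k → ∞. -/
open Matrix Filter

/-!
The error `Σ_k - Σ⋆` obeys the homogeneous recursion `E_{k+1} = A E_k Aᵀ`, so
`Σ_k - Σ⋆ = A^k (Σ₀ - Σ⋆) (A^k)ᵀ`. By Gelfand's formula `‖A^k‖^(1/k)` tends to the spectral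
radius of `A`, which is `< 1`; hence `‖A^k‖` is eventually bounded by a geometric sequence and
`A^k → 0`.
-/

open scoped NNReal ENNReal Topology

namespace spectrum

variable {A : Type*} [NormedRing A] [NormedAlgebra ℂ A] [CompleteSpace A]

theorem eventually_nnnorm_pow_le_of_spectralRadius_lt {a : A} {r : ℝ≥0}
    (h : spectralRadius ℂ a < r) : ∀ᶠ k : ℕ in atTop, ‖a ^ k‖₊ ≤ r ^ k := by
  filter_upwards [(pow_nnnorm_pow_one_div_tendsto_nhds_spectralRadius a).eventually_lt_const h,
    eventually_ne_atTop 0] with k hk hk0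
  have hk' : ((‖a ^ k‖₊ : ℝ≥0∞) ^ (1 / (k : ℝ))) ^ (k : ℝ) ≤ (r : ℝ≥0∞) ^ (k : ℝ) :=
    ENNReal.rpow_le_rpow hk.le k.cast_nonneg
  rw [← ENNReal.rpow_mul, one_div_mul_cancel (Nat.cast_ne_zero.mpr hk0), ENNReal.rpow_one,
    ENNReal.rpow_natCast] at hk'
  exact_mod_cast hk'

theorem tendsto_pow_atTop_nhds_zero_of_spectralRadius_lt_one {a : A}
    (h : spectralRadius ℂ a < 1) : Tendsto (a ^ ·) atTop (𝓝 0) := by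
  obtain ⟨r, hr, hr1⟩ := ENNReal.lt_iff_exists_nnreal_btwn.mp h
  refine squeeze_zero_norm' ?_ (tendsto_pow_atTop_nhds_zero_of_lt_one r.coe_nonneg
    (by exact_mod_cast hr1))
  filter_upwards [eventually_nnnorm_pow_le_of_spectralRadius_lt hr] with k hk
  exact_mod_cast hk

theorem tendsto_pow_atTop_nhds_zero_of_forall_norm_lt_one {a : A}
    (h : ∀ z ∈ spectrum ℂ a, ‖z‖ < 1) : Tendsto (a ^ ·) atTop (𝓝 0) := by
  rcases subsingleton_or_nontrivial A with hA | hA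
  · simp [Subsingleton.elim _ (0 : A)]
  · refine tendsto_pow_atTop_nhds_zero_of_spectralRadius_lt_one ?_
    exact_mod_cast spectralRadius_lt_of_forall_lt a (r := 1) fun z hz => by exact_mod_cast h z hz

end spectrum

/- The `L∞` operator norm is only an auxiliary Banach algebra structure: it induces the usual
entrywise topology, in which the statement is phrased. -/
theorem Matrix.tendsto_pow_atTop_nhds_zero_of_forall_norm_lt_one {m : Type*} [Fintype m]
    [DecidableEq m] {B : Matrix m m ℂ} (h : ∀ z ∈ spectrum ℂ B, ‖z‖ < 1) :
    Tendsto (B ^ ·) atTop (𝓝 0) := by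
  let := Matrix.linftyOpNormedRing (n := m) (α := ℂ)
  let := Matrix.linftyOpNormedAlgebra (n := m) (R := ℂ) (α := ℂ)
  have : CompleteSpace (Matrix m m ℂ) := FiniteDimensional.complete ℂ _
  exact spectrum.tendsto_pow_atTop_nhds_zero_of_forall_norm_lt_one h

theorem IsSchurStable.tendsto_pow_atTop_nhds_zero {n : ℕ} {A : Matrix (Fin n) (Fin n) ℝ}
    (hA : IsSchurStable A) : Tendsto (A ^ ·) atTop (𝓝 0) := by
  have hre : Continuous fun B : Matrix (Fin n) (Fin n) ℂ => B.map Complex.re :=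
    continuous_id.matrix_map Complex.continuous_re
  have hlim := (hre.tendsto 0).comp (Matrix.tendsto_pow_atTop_nhds_zero_of_forall_norm_lt_one hA)
  convert hlim using 2 with k
  · change A ^ k = (Complex.ofRealHom.mapMatrix A ^ k).map Complex.re
    rw [← map_pow]
    ext
    simp
  · simp

theorem Matrix.sub_eq_pow_mul_mul_transpose_pow_of_lyapunov {m R : Type*} [Fintype m]
    [DecidableEq m] [CommRing R] {A Q S : Matrix m m R} {f : ℕ → Matrix m m R}
    (hS : A * S * Aᵀ + Q = S) (hf : ∀ k, f (k + 1) = A * f k * Aᵀ + Q) (k : ℕ) :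
    f k - S = A ^ k * (f 0 - S) * (A ^ k)ᵀ := by
  induction k with
  | zero => simp
  | succ k ih =>
    calc f (k + 1) - S = A * f k * Aᵀ + Q - (A * S * Aᵀ + Q) := by rw [hf, hS]
      _ = A * (f k - S) * Aᵀ := by noncomm_ring
      _ = A ^ (k + 1) * (f 0 - S) * (A ^ (k + 1))ᵀ := by
        rw [ih, pow_succ', transpose_mul]; noncomm_ring

/-- If `A` is Schur stable and `S⋆` solves the discrete Lyapunov equation
`A Σ Aᵀ − Σ + Q = 0`, then for every initial matrix `Σ₀` the iteration
`Σ_{k+1} = A Σ_k Aᵀ + Q` converges to `S⋆`. -/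
theorem lyapunov_iteration_tendsto {n : ℕ}
    (A Q Sstar : Matrix (Fin n) (Fin n) ℝ) (hA : IsSchurStable A)
    (hStar : A * Sstar * Aᵀ - Sstar + Q = 0) :
    ∀ (S0 : Matrix (Fin n) (Fin n) ℝ) (f : ℕ → Matrix (Fin n) (Fin n) ℝ),
      f 0 = S0 → (∀ k, f (k + 1) = A * f k * Aᵀ + Q) →
      Tendsto f atTop (nhds Sstar) := by
  intro _ f _ hf
  have hS : A * Sstar * Aᵀ + Q = Sstar := by rw [← sub_eq_zero, ← hStar]; abel
  have hconj : Continuous fun X : Matrix (Fin n) (Fin n) ℝ => X * (f 0 - Sstar) * Xᵀ :=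
    (continuous_id.matrix_mul continuous_const).matrix_mul continuous_id.matrix_transpose
  have herr : Tendsto (fun k => f k - Sstar) atTop (𝓝 0) := by
    refine .congr (fun k => (sub_eq_pow_mul_mul_transpose_pow_of_lyapunov hS hf k).symm) ?_
    simpa only [zero_mul, Function.comp_def] using
      (hconj.tendsto 0).comp hA.tendsto_pow_atTop_nhds_zero
  simpa only [sub_add_cancel, zero_add] using herr.add_const Sstar
end
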